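/- For all n ≥ 0, the plane 1-2 hipster numbers satisfy 0 < h_n ≤ m_n, where m_n is the n-th Motzkin number. -/

import Mathlib

/-!
One proves the stronger bound `0 < h n ≤ m (n - 1)` by strong induction; since the Motzkin
numbers are positive, `m (n - 1) ≤ m n` then gives the theorem. For `n ≥ 2` the recurrence reads
`h n = h (n - 1) + ∑_{j < n - 2} h (j + 1) h (n - 2 - j) - [n odd] h ((n - 1) / 2)`, and comparing it
termwise with `m (n - 1) = m (n - 2) + ∑_{j < n - 2} m j m (n - 3 - j)` bounds `h n` from above.
It stays positive because for odd `n` the sum contains the square `h c ^ 2 ≥ h c`, `c = (n - 1) / 2`.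
-/

open Finset

def MotzkinRecurrence (m : ℕ → ℤ) : Prop :=
  ∀ n, 1 ≤ n → m n = m (n - 1) + ∑ i ∈ range (n - 1), m i * m (n - 2 - i)

def HipsterRecurrence (h : ℕ → ℤ) : Prop :=
  ∀ n, 1 ≤ n → h n = (∑ i ∈ Ico 1 n, h i * h (n - 1 - i))
    - (if Odd n then h ((n - 1) / 2) else 0) + 2 * (if n = 1 then 1 else 0)

section Motzkin

variable {m : ℕ → ℤ}

theorem motzkin_succ (hm : MotzkinRecurrence m) (k : ℕ) :
    m (k + 1) = m k + ∑ j ∈ range k, m j * m (k - 1 - j) := by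
  rw [hm (k + 1) (by omega), Nat.add_sub_cancel]
  exact congrArg _ (sum_congr rfl fun j _ => by congr 2)

theorem motzkin_pos (hm0 : m 0 = 1) (hm : MotzkinRecurrence m) (n : ℕ) :
    0 < m n := by
  induction n using Nat.strong_induction_on with
  | _ n ih =>
    rcases n with _ | k
    · simp [hm0]
    · rw [motzkin_succ hm]
      have hsum : 0 ≤ ∑ j ∈ range k, m j * m (k - 1 - j) :=
        sum_nonneg fun j hj => (mul_pos (ih j (by have := mem_range.1 hj; omega)) (ih _ (by omega))).le
      linarith [ih k (by omega)]

theorem motzkin_pred_le (hm0 : m 0 = 1) (hm : MotzkinRecurrence m) (n : ℕ) :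
    m (n - 1) ≤ m n := by
  rcases n with _ | k
  · rfl
  · rw [motzkin_succ hm, Nat.add_sub_cancel]
    have hsum : 0 ≤ ∑ j ∈ range k, m j * m (k - 1 - j) :=
      sum_nonneg fun j _ => (mul_pos (motzkin_pos hm0 hm j) (motzkin_pos hm0 hm _)).le
    linarith

end Motzkin

section Hipster

variable {h : ℕ → ℤ}

theorem hipster_one (hh0 : h 0 = 1) (hh : HipsterRecurrence h) :
    h 1 = 1 := by
  rw [hh 1 le_rfl]
  simp [hh0]

theorem hipster_succ_succ (hh0 : h 0 = 1) (hh : HipsterRecurrence h) (k : ℕ) :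
    h (k + 2) = h (k + 1) + ∑ j ∈ range k, h (j + 1) * h (k - j)
      - if Odd k then h ((k + 1) / 2) else 0 := by
  have hsum : ∑ i ∈ Ico 1 (k + 2), h i * h (k + 2 - 1 - i)
      = ∑ j ∈ range k, h (j + 1) * h (k - j) + h (k + 1) := by
    simp only [sum_Ico_eq_sum_range, show k + 2 - 1 = k + 1 by omega]
    rw [sum_range_succ, show k + 1 - (1 + k) = 0 by omega, hh0, mul_one, add_comm 1 k]
    exact congrArg (· + _) (sum_congr rfl fun j _ => by congr 2 <;> omega)
  have hodd : Odd (k + 2) ↔ Odd k := by simp [Nat.odd_add]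
  rw [hh (k + 2) (by omega), hsum, if_neg (show k + 2 ≠ 1 by omega),
    show k + 2 - 1 = k + 1 by omega]
  simp only [hodd, mul_zero, add_zero]
  ring

theorem hipster_succ_succ_pos (hh0 : h 0 = 1) (hh : HipsterRecurrence h) {k : ℕ}
    (hpos : ∀ i ≤ k + 1, 0 < h i) :
    0 < h (k + 2) := by
  have hterm : ∀ j ∈ range k, 0 ≤ h (j + 1) * h (k - j) := fun j hj =>
    (mul_pos (hpos _ (by have := mem_range.1 hj; omega)) (hpos _ (by omega))).le
  rw [hipster_succ_succ hh0 hh]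
  split_ifs with hk
  · obtain ⟨c, rfl⟩ := hk
    have hc : 0 < h (c + 1) := hpos _ (by omega)
    have hc_le_sq : h (c + 1) ≤ h (c + 1) * h (c + 1) := le_mul_of_one_le_right hc.le hc
    have hsquare := single_le_sum hterm (mem_range.2 (show c < 2 * c + 1 by omega))
    rw [show 2 * c + 1 - c = c + 1 by omega] at hsquare
    rw [show (2 * c + 1 + 1) / 2 = c + 1 by omega]
    linarith [hpos (2 * c + 1 + 1) le_rfl]
  · linarith [hpos (k + 1) le_rfl, sum_nonneg hterm]

theorem hipster_succ_succ_le_motzkin {m : ℕ → ℤ} (hm : MotzkinRecurrence m)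
    (hh0 : h 0 = 1) (hh : HipsterRecurrence h) {k : ℕ}
    (hmpos : ∀ i, 0 < m i) (hpos : ∀ i ≤ k + 1, 0 < h i) (hle : ∀ i ≤ k + 1, h i ≤ m (i - 1)) :
    h (k + 2) ≤ m (k + 1) := by
  have hconv : ∑ j ∈ range k, h (j + 1) * h (k - j) ≤ ∑ j ∈ range k, m j * m (k - 1 - j) := by
    refine sum_le_sum fun j hj => ?_
    have hj : j < k := mem_range.1 hj
    have h1 : h (j + 1) ≤ m j := hle (j + 1) (by omega)
    have h2 : h (k - j) ≤ m (k - 1 - j) := by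
      convert hle (k - j) (by omega) using 2; omega
    exact mul_le_mul h1 h2 (hpos _ (by omega)).le (hmpos j).le
  have hodd : 0 ≤ if Odd k then h ((k + 1) / 2) else 0 := by
    split_ifs
    · exact (hpos _ (by omega)).le
    · rfl
  have hlast : h (k + 1) ≤ m k := hle (k + 1) le_rfl
  rw [hipster_succ_succ hh0 hh, motzkin_succ hm]
  linarith

theorem hipster_pos_and_le_motzkin_pred {m : ℕ → ℤ} (hm0 : m 0 = 1) (hm : MotzkinRecurrence m)
    (hh0 : h 0 = 1) (hh : HipsterRecurrence h) (n : ℕ) :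
    0 < h n ∧ h n ≤ m (n - 1) := by
  induction n using Nat.strong_induction_on with
  | _ n ih =>
    match n, ih with
    | 0, _ => simp [hh0, hm0]
    | 1, _ => simp [hipster_one hh0 hh, hm0]
    | k + 2, ih =>
      have hpos : ∀ i ≤ k + 1, 0 < h i := fun i hi => (ih i (by omega)).1
      exact ⟨hipster_succ_succ_pos hh0 hh hpos,
        hipster_succ_succ_le_motzkin hm hh0 hh (motzkin_pos hm0 hm) hpos
          fun i hi => (ih i (by omega)).2⟩

end Hipster

/-- For all `n ≥ 0`, the plane 1-2 hipster numbers satisfy `0 < h n ≤ m n`,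
where `m n` is the `n`-th Motzkin number. -/
theorem plane12_hipster_le_motzkin
    (m h : ℕ → ℤ)
    (hm0 : m 0 = 1)
    (hm : ∀ n, 1 ≤ n →
      m n = m (n - 1) + ∑ i ∈ Finset.range (n - 1), m i * m (n - 2 - i))
    (hh0 : h 0 = 1)
    (hh : ∀ n, 1 ≤ n →
      h n = (∑ i ∈ Finset.Ico 1 n, h i * h (n - 1 - i))
              - (if Odd n then h ((n - 1) / 2) else 0)
              + 2 * (if n = 1 then 1 else 0)) :
    ∀ n, 0 < h n ∧ h n ≤ m n := fun n =>
  have hbound := hipster_pos_and_le_motzkin_pred hm0 hm hh0 hh n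
  ⟨hbound.1, hbound.2.trans (motzkin_pred_le hm0 hm n)⟩
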